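/- arXiv:1409.0713 — 3 statements merged into one kernel-verified Lean document; each statement's English description precedes it below -/
import Mathlib

section
/- Under the Weibull proportional hazards model, the mixture ratio of median survival times always lies weakly between the two subgroup ratios of medians: min(θ₁^{−1/k}, (θ₁θ₃)^{−1/k}) ≤ ν^{Rx}/ν^{C} ≤ max(θ₁^{−1/k}, (θ₁θ₃)^{−1/k}); i.e., Simpson's paradox cannot occur for the ratio-of-medians efficacy measure. -/
/-!
With the cumulative hazards `u = (ν^C/λ)^k` and `w = (ν^Rx/λ)^k`, both median equations read
`(1-γ) e^{-a} + γ e^{-θ₂ b} = 1/2`: for the control arm with `a = b = u`, for the treatment arm with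
`a = θ₁ w`, `b = θ₁θ₃ w`. Each term is antitone and their sum is strictly antitone, so `u` lies
between `θ₁ w` and `θ₁θ₃ w`. Hence `u / w` lies between `θ₁` and `θ₁θ₃`, and applying the antitone
map `c ↦ c^{-1/k}` turns `u / w` into `ν^Rx / ν^C`.
-/

open Real Set

theorem StrictAnti.mem_uIcc_of_add_eq_add {α β : Type*} [LinearOrder α] [AddCommMonoid β]
    [PartialOrder β] [IsOrderedCancelAddMonoid β] {f g : α → β} (hf : StrictAnti f)
    (hg : Antitone g) {a b v : α} (h : f a + g b = f v + g v) : v ∈ uIcc a b := by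
  have hfg := hf.add_antitone hg
  constructor
  · refine hfg.le_iff_ge.mp ?_
    calc f v + g v = f a + g b := h.symm
      _ ≤ f (a ⊓ b) + g (a ⊓ b) := add_le_add (hf.antitone inf_le_left) (hg inf_le_right)
  · refine hfg.le_iff_ge.mp ?_
    calc f (a ⊔ b) + g (a ⊔ b) ≤ f a + g b := add_le_add (hf.antitone le_sup_left) (hg le_sup_right)
      _ = f v + g v := h

theorem antitone_const_mul_exp_neg_mul {c θ : ℝ} (hc : 0 ≤ c) (hθ : 0 ≤ θ) :
    Antitone fun t => c * exp (-(θ * t)) := by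
  intro s t hst
  dsimp only
  gcongr

theorem strictAnti_const_mul_exp_neg {c : ℝ} (hc : 0 < c) : StrictAnti fun t => c * exp (-t) := by
  intro s t hst
  dsimp only
  gcongr

theorem rpow_rpow_neg_one_div {x k : ℝ} (hx : 0 ≤ x) (hk : k ≠ 0) :
    (x ^ k) ^ (-(1 / k)) = x⁻¹ := by
  rw [rpow_neg (rpow_nonneg hx k), one_div, rpow_rpow_inv hx hk]

/-- The mixture ratio of medians always lies weakly between the two subgroup
ratios of medians: no Simpson's paradox for ratio of medians. -/
theorem stmt_11 (lam k θ1 θ2 θ3 γ νRx νC : ℝ)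
    (hlam : 0 < lam) (hk : 0 < k) (hθ1 : 0 < θ1) (hθ2 : 0 < θ2) (hθ3 : 0 < θ3)
    (hγ : γ ∈ Set.Ioo (0:ℝ) 1) (hνRx : 0 < νRx) (hνC : 0 < νC)
    (hRx : (1 - γ) * Real.exp (-(θ1 * (νRx / lam) ^ k)) +
        γ * Real.exp (-(θ1 * θ2 * θ3 * (νRx / lam) ^ k)) = 1/2)
    (hC : (1 - γ) * Real.exp (-((νC / lam) ^ k)) +
        γ * Real.exp (-(θ2 * (νC / lam) ^ k)) = 1/2) :
    min (θ1 ^ (-(1/k))) ((θ1 * θ3) ^ (-(1/k))) ≤ νRx / νC ∧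
      νRx / νC ≤ max (θ1 ^ (-(1/k))) ((θ1 * θ3) ^ (-(1/k))) := by
  set w := (νRx / lam) ^ k
  set u := (νC / lam) ^ k
  have hw : 0 < w := by positivity
  have hu : u ∈ uIcc (θ1 * w) (θ1 * θ3 * w) := by
    refine (strictAnti_const_mul_exp_neg (sub_pos.2 hγ.2)).mem_uIcc_of_add_eq_add
      (antitone_const_mul_exp_neg_mul hγ.1.le hθ2.le) ?_
    rw [hC, ← hRx]
    ring_nf
  have hc : u / w ∈ uIcc θ1 (θ1 * θ3) := by
    have := mem_image_of_mem (· / w) hu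
    rwa [image_div_const_uIcc, mul_div_cancel_right₀ _ hw.ne',
      mul_div_cancel_right₀ _ hw.ne'] at this
  have hratio : (u / w) ^ (-(1 / k)) = νRx / νC := by
    rw [← div_rpow (by positivity) (by positivity), rpow_rpow_neg_one_div (by positivity) hk.ne',
      inv_div, div_div_div_cancel_right₀ hlam.ne']
  rw [← hratio]
  refine (antitoneOn_rpow_Ioi_of_exponent_nonpos ?_).mono ?_ |>.mapsTo_uIcc hc
  · exact neg_nonpos.2 (by positivity)
  · exact fun c hmem => lt_of_lt_of_le (lt_min hθ1 (by positivity)) hmem.1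
end

section
/- Simpson's paradox for relative risk cannot occur when mixing is done on the probability (response-rate) scale with a common denominator structure, but can occur with marginal means: there exist joint probabilities p^{Rx}_{g±(R)}, p^{C}_{g±(R)} > 0 and unequal treatment-arm subgroup compositions such that each subgroup relative risk exceeds 1 while the marginal (composition-ignoring) relative risk is less than 1; yet the correctly mixed overall relative risk (p^{Rx}_{g+(R)}+p^{Rx}_{g−(R)})/(p^{C}_{g+(R)}+p^{C}_{g−(R)}) always lies between the subgroup relative risks. -/
/-- Simpson's paradox can occur for the marginal (composition-ignoring)
relative risk, but the correctly mixed overall relative risk always lies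
between the subgroup relative risks. -/
theorem stmt_18 :
    (∃ pRp pRm pCp pCm wRp wCp : ℝ,
      pRp ∈ Set.Ioo (0:ℝ) 1 ∧ pRm ∈ Set.Ioo (0:ℝ) 1 ∧
      pCp ∈ Set.Ioo (0:ℝ) 1 ∧ pCm ∈ Set.Ioo (0:ℝ) 1 ∧
      wRp ∈ Set.Ioo (0:ℝ) 1 ∧ wCp ∈ Set.Ioo (0:ℝ) 1 ∧
      1 < pRp / pCp ∧ 1 < pRm / pCm ∧
      (wRp * pRp + (1 - wRp) * pRm) / (wCp * pCp + (1 - wCp) * pCm) < 1) ∧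
    (∀ pRp pRm pCp pCm : ℝ, 0 < pRp → 0 < pRm → 0 < pCp → 0 < pCm →
      min (pRp / pCp) (pRm / pCm) ≤ (pRp + pRm) / (pCp + pCm) ∧
        (pRp + pRm) / (pCp + pCm) ≤ max (pRp / pCp) (pRm / pCm)) := by
  constructor
  · refine ⟨0.5, 0.05, 0.4, 0.04, 0.1, 0.9, ?_, ?_, ?_, ?_, ?_, ?_, ?_, ?_, ?_⟩ <;>
      norm_num [Set.mem_Ioo]
  · intro a b c d ha hb hc hd
    have hcd : 0 < c + d := by linarith
    rcases le_total (a / c) (b / d) with h | h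
    · rw [min_eq_left h, max_eq_right h]
      rw [div_le_div_iff₀ hc hd] at h
      constructor
      · rw [div_le_div_iff₀ hc hcd]; nlinarith
      · rw [div_le_div_iff₀ hcd hd]; nlinarith
    · rw [min_eq_right h, max_eq_left h]
      rw [div_le_div_iff₀ hd hc] at h
      constructor
      · rw [div_le_div_iff₀ hd hcd]; nlinarith
      · rw [div_le_div_iff₀ hcd hc]; nlinarith
end

section
/- For the Weibull proportional hazards model, the map from the parameters (λ, k, θ₁, θ₂, θ₃) ∈ (0,∞)⁵ with fixed γ ∈ (0,1) to the mixture median under treatment ν^{Rx} (the unique positive root of (1−γ)exp(−θ₁(t/λ)^k) + γexp(−θ₁θ₂θ₃(t/λ)^k) = 1/2) is well defined and continuous. -/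
/-!
Substituting `x = θ₁ (t/λ)^k` turns the median equation into `S_r(x) = 1/2` for the mixture
survival function `S_r(x) = (1-γ)e^{-x} + γe^{-rx}` with `r = θ₂θ₃`. This function is strictly
decreasing from `1` (at `0`) to `0` (at `∞`), so it has a unique root `x(r)`, and the median is
`λ (x(r)/θ₁)^{1/k}`. The root is continuous in `r`: since `S_r` is continuous in `r`, the strict
inequalities `S_{r₀}(x(r₀) - ε) > 1/2 > S_{r₀}(x(r₀) + ε)` persist for `r` near `r₀`, and
monotonicity then traps `x(r)` between `x(r₀) ± ε`.
-/

open Filter Topology Set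

theorem continuousOn_root_of_strictAnti {X α β : Type*} [TopologicalSpace X]
    [LinearOrder α] [TopologicalSpace α] [OrderTopology α]
    [LinearOrder β] [TopologicalSpace β] [OrderClosedTopology β]
    {F : X → α → β} {g : X → α} {s : Set X} {c : β}
    (hF : ∀ x, ContinuousOn (F · x) s) (hanti : ∀ p ∈ s, StrictAnti (F p))
    (hg : ∀ p ∈ s, F p (g p) = c) : ContinuousOn g s := by
  intro p₀ hp₀
  refine tendsto_order.2 ⟨fun a ha => ?_, fun a ha => ?_⟩
  · have hc : c < F p₀ a := hg p₀ hp₀ ▸ hanti p₀ hp₀ ha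
    filter_upwards [(hF a p₀ hp₀).eventually_const_lt hc, self_mem_nhdsWithin] with p hp hps
    exact (hanti p hps).lt_iff_gt.1 (hg p hps ▸ hp)
  · have hc : F p₀ a < c := hg p₀ hp₀ ▸ hanti p₀ hp₀ ha
    filter_upwards [(hF a p₀ hp₀).eventually_lt_const hc, self_mem_nhdsWithin] with p hp hps
    exact (hanti p hps).lt_iff_gt.1 (hg p hps ▸ hp)

noncomputable def mixtureSurvival (γ r x : ℝ) : ℝ :=
  (1 - γ) * Real.exp (-x) + γ * Real.exp (-(r * x))

section mixtureSurvival

variable {γ r : ℝ}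

theorem mixtureSurvival_strictAnti (hγ₀ : 0 ≤ γ) (hγ₁ : γ ≤ 1) (hr : 0 < r) :
    StrictAnti (mixtureSurvival γ r) := by
  intro x y hxy
  have h₁ : Real.exp (-y) < Real.exp (-x) := Real.exp_lt_exp.2 (by linarith)
  have h₂ : Real.exp (-(r * y)) < Real.exp (-(r * x)) := Real.exp_lt_exp.2 (by nlinarith)
  unfold mixtureSurvival
  rcases hγ₁.eq_or_lt with rfl | hγ₁
  · linarith
  · nlinarith [mul_pos (sub_pos.2 hγ₁) (sub_pos.2 h₁), mul_nonneg hγ₀ (sub_pos.2 h₂).le]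

theorem mixtureSurvival_zero (γ r : ℝ) : mixtureSurvival γ r 0 = 1 := by
  simp [mixtureSurvival]

theorem continuous_mixtureSurvival (γ r : ℝ) : Continuous (mixtureSurvival γ r) := by
  unfold mixtureSurvival; fun_prop

theorem continuous_mixtureSurvival_left (γ x : ℝ) : Continuous (mixtureSurvival γ · x) := by
  unfold mixtureSurvival; fun_prop

theorem tendsto_mixtureSurvival_atTop (hr : 0 < r) :
    Tendsto (mixtureSurvival γ r) atTop (𝓝 0) := by
  have h := Real.tendsto_exp_neg_atTop_nhds_zero
  unfold mixtureSurvival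
  simpa using (h.const_mul (1 - γ)).add ((h.comp (tendsto_id.const_mul_atTop hr)).const_mul γ)

theorem tendsto_mixtureSurvival_zero :
    Tendsto (mixtureSurvival γ r) (𝓝[>] 0) (𝓝 1) := by
  have h := (continuous_mixtureSurvival γ r).continuousWithinAt (s := Ioi 0) (x := 0)
  rwa [ContinuousWithinAt, mixtureSurvival_zero] at h

theorem exists_mixtureSurvival_eq (hr : 0 < r) {c : ℝ} (hc : c ∈ Ioo 0 1) :
    ∃ x, 0 < x ∧ mixtureSurvival γ r x = c :=
  isPreconnected_Ioi.intermediate_value_Ioo (le_principal_iff.2 (Ioi_mem_atTop 0))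
    (le_principal_iff.2 self_mem_nhdsWithin) (continuous_mixtureSurvival γ r).continuousOn
    (tendsto_mixtureSurvival_atTop hr) tendsto_mixtureSurvival_zero hc

end mixtureSurvival

noncomputable def mixtureSurvivalInv (γ r c : ℝ) : ℝ :=
  Classical.epsilon fun x => 0 < x ∧ mixtureSurvival γ r x = c

section mixtureSurvivalInv

variable {γ r c : ℝ}

theorem mixtureSurvivalInv_spec (hr : 0 < r) (hc : c ∈ Ioo 0 1) :
    0 < mixtureSurvivalInv γ r c ∧ mixtureSurvival γ r (mixtureSurvivalInv γ r c) = c :=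
  Classical.epsilon_spec (exists_mixtureSurvival_eq hr hc)

theorem mixtureSurvival_eq_iff (hγ₀ : 0 ≤ γ) (hγ₁ : γ ≤ 1) (hr : 0 < r) (hc : c ∈ Ioo 0 1)
    {x : ℝ} : mixtureSurvival γ r x = c ↔ x = mixtureSurvivalInv γ r c := by
  conv_lhs => rw [← (mixtureSurvivalInv_spec (γ := γ) hr hc).2]
  exact (mixtureSurvival_strictAnti hγ₀ hγ₁ hr).injective.eq_iff

theorem continuousOn_mixtureSurvivalInv (hγ₀ : 0 ≤ γ) (hγ₁ : γ ≤ 1) (hc : c ∈ Ioo 0 1) :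
    ContinuousOn (mixtureSurvivalInv γ · c) (Ioi 0) :=
  continuousOn_root_of_strictAnti (fun x => (continuous_mixtureSurvival_left γ x).continuousOn)
    (fun _ hr => mixtureSurvival_strictAnti hγ₀ hγ₁ hr)
    (fun _ hr => (mixtureSurvivalInv_spec hr hc).2)

end mixtureSurvivalInv

theorem mul_div_rpow_eq_iff {lam k θ x t : ℝ} (hlam : 0 < lam) (hk : k ≠ 0) (hθ : 0 < θ)
    (hx : 0 ≤ x) (ht : 0 ≤ t) : θ * (t / lam) ^ k = x ↔ t = lam * (x / θ) ^ k⁻¹ := by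
  rw [mul_comm, ← eq_div_iff hθ.ne', eq_comm, ← Real.rpow_inv_eq (div_nonneg hx hθ.le)
    (div_nonneg ht hlam.le) hk, eq_comm, div_eq_iff hlam.ne', mul_comm]

noncomputable def weibullMixtureMedian (γ lam k θ₁ θ₂ θ₃ : ℝ) : ℝ :=
  lam * (mixtureSurvivalInv γ (θ₂ * θ₃) (1 / 2) / θ₁) ^ k⁻¹

section weibullMixtureMedian

variable {γ lam k θ₁ θ₂ θ₃ : ℝ}

theorem weibullMixtureMedian_pos (hlam : 0 < lam) (hθ₁ : 0 < θ₁) (hθ₂ : 0 < θ₂) (hθ₃ : 0 < θ₃) :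
    0 < weibullMixtureMedian γ lam k θ₁ θ₂ θ₃ :=
  have hinv := (mixtureSurvivalInv_spec (γ := γ) (mul_pos hθ₂ hθ₃) (by norm_num)).1
  mul_pos hlam (Real.rpow_pos_of_pos (div_pos hinv hθ₁) _)

theorem weibullMixture_eq_half_iff (hγ : γ ∈ Ioo 0 1) (hlam : 0 < lam) (hk : 0 < k)
    (hθ₁ : 0 < θ₁) (hθ₂ : 0 < θ₂) (hθ₃ : 0 < θ₃) {t : ℝ} (ht : 0 < t) :
    (1 - γ) * Real.exp (-(θ₁ * (t / lam) ^ k)) +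
        γ * Real.exp (-(θ₁ * θ₂ * θ₃ * (t / lam) ^ k)) = 1 / 2 ↔
      t = weibullMixtureMedian γ lam k θ₁ θ₂ θ₃ := by
  have hr : 0 < θ₂ * θ₃ := mul_pos hθ₂ hθ₃
  have hx : 0 ≤ mixtureSurvivalInv γ (θ₂ * θ₃) (1 / 2) :=
    (mixtureSurvivalInv_spec hr (by norm_num)).1.le
  rw [weibullMixtureMedian, ← mul_div_rpow_eq_iff hlam hk.ne' hθ₁ hx ht.le,
    ← mixtureSurvival_eq_iff hγ.1.le hγ.2.le hr (by norm_num), mixtureSurvival]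
  ring_nf

theorem continuousOn_weibullMixtureMedian (hγ : γ ∈ Ioo 0 1) :
    ContinuousOn (fun p : ℝ × ℝ × ℝ × ℝ × ℝ =>
        weibullMixtureMedian γ p.1 p.2.1 p.2.2.1 p.2.2.2.1 p.2.2.2.2)
      {p | 0 < p.1 ∧ 0 < p.2.1 ∧ 0 < p.2.2.1 ∧ 0 < p.2.2.2.1 ∧ 0 < p.2.2.2.2} := by
  have hinv : ContinuousOn (fun p : ℝ × ℝ × ℝ × ℝ × ℝ =>
      mixtureSurvivalInv γ (p.2.2.2.1 * p.2.2.2.2) (1 / 2)) {p | 0 < p.2.2.2.1 * p.2.2.2.2} :=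
    (continuousOn_mixtureSurvivalInv hγ.1.le hγ.2.le (by norm_num)).comp (by fun_prop)
      fun _ hp => hp
  refine continuousOn_fst.mul <| ContinuousOn.rpow ?_ ?_ fun p hp => Or.inl ?_
  · exact (hinv.mono fun p hp => mul_pos hp.2.2.2.1 hp.2.2.2.2).div (by fun_prop)
      fun p hp => hp.2.2.1.ne'
  · exact ContinuousOn.inv₀ (by fun_prop) fun p hp => hp.2.1.ne'
  · exact (div_pos (mixtureSurvivalInv_spec (mul_pos hp.2.2.2.1 hp.2.2.2.2)
      (by norm_num)).1 hp.2.2.1).ne'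

end weibullMixtureMedian

/-- The mixture median under treatment is a well-defined and continuous
function of the Weibull PH model parameters `(λ, k, θ₁, θ₂, θ₃) ∈ (0,∞)⁵`. -/
theorem stmt_19 (γ : ℝ) (hγ : γ ∈ Set.Ioo (0:ℝ) 1) :
    ∃ f : ℝ → ℝ → ℝ → ℝ → ℝ → ℝ,
      (∀ lam k θ1 θ2 θ3 : ℝ, 0 < lam → 0 < k → 0 < θ1 → 0 < θ2 → 0 < θ3 →
        (0 < f lam k θ1 θ2 θ3 ∧
          (1 - γ) * Real.exp (-(θ1 * (f lam k θ1 θ2 θ3 / lam) ^ k)) +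
            γ * Real.exp (-(θ1 * θ2 * θ3 * (f lam k θ1 θ2 θ3 / lam) ^ k)) = 1/2 ∧
          ∀ t : ℝ, 0 < t →
            (1 - γ) * Real.exp (-(θ1 * (t / lam) ^ k)) +
              γ * Real.exp (-(θ1 * θ2 * θ3 * (t / lam) ^ k)) = 1/2 →
            t = f lam k θ1 θ2 θ3)) ∧
      ContinuousOn (fun p : ℝ × ℝ × ℝ × ℝ × ℝ =>
          f p.1 p.2.1 p.2.2.1 p.2.2.2.1 p.2.2.2.2)
        {p : ℝ × ℝ × ℝ × ℝ × ℝ |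
          0 < p.1 ∧ 0 < p.2.1 ∧ 0 < p.2.2.1 ∧ 0 < p.2.2.2.1 ∧ 0 < p.2.2.2.2} := by
  refine ⟨weibullMixtureMedian γ, fun lam k θ1 θ2 θ3 hlam hk hθ1 hθ2 hθ3 => ?_,
    continuousOn_weibullMixtureMedian hγ⟩
  have hmedian := weibullMixtureMedian_pos (γ := γ) (k := k) hlam hθ1 hθ2 hθ3
  exact ⟨hmedian, (weibullMixture_eq_half_iff hγ hlam hk hθ1 hθ2 hθ3 hmedian).2 rfl,
    fun t ht => (weibullMixture_eq_half_iff hγ hlam hk hθ1 hθ2 hθ3 ht).1⟩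
end
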